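/- Let f = (f_V, {f_{l,v}}) : Γ → Γ' be a morphism of moment graphs on Λ and let ξ = {ξ_v}_{v∈V} be a Γ-monodromy such that whenever v—w is an edge of Γ with f_V(v) ≠ f_V(w), one has ξ_v(l'(f_E(v—w))) ∈ l(v—w)·ℤ. Then the map f^{ξ*} : (z_{v'})_{v'∈V'} ↦ (ξ_v(z_{f_V(v)}))_{v∈V} is a well-defined ring homomorphism from the structure algebra of Γ' to the structure algebra of Γ (both in the multiplicative case, f^{ξ*} : Z_m(Γ') → Z_m(Γ), with ξ_v acting on ℤ[Λ] by e^λ ↦ e^{ξ_v(λ)}, and in the additive case, f^{ξ*} : Z_a(Γ') → Z_a(Γ)). -/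

import Mathlib

noncomputable section

/-- A moment graph on a lattice `Λ`: a poset of vertices (the order given as a
relation with axioms), a set of directed edges `E ⊆ V × V`, and a label function
assigning to each edge a nonzero element of `Λ`, such that edges respect the
order and are not loops. -/
structure MomentGraph (Λ : Type*) [AddCommGroup Λ] (V : Type*) where
  le : V → V → Prop
  le_refl : ∀ v, le v v
  le_trans : ∀ u v w, le u v → le v w → le u w
  le_antisymm : ∀ v w, le v w → le w v → v = w
  E : V → V → Prop
  label : V → V → Λ
  label_ne_zero : ∀ {v w}, E v w → label v w ≠ 0
  le_of_E : ∀ {v w}, E v w → le v w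
  ne_of_E : ∀ {v w}, E v w → v ≠ w

namespace MomentGraph

variable {Λ : Type*} [AddCommGroup Λ] {V V' : Type*}

/-- Underlying (unoriented) adjacency `v — w`. -/
def Adj (G : MomentGraph Λ V) (v w : V) : Prop := G.E v w ∨ G.E w v

open Classical in
/-- The label of the unoriented edge `v — w` (there are no multiple edges, so this
is well defined on adjacent pairs). -/
def albl (G : MomentGraph Λ V) (v w : V) : Λ := if G.E v w then G.label v w else G.label w v

/-- A morphism of moment graphs on the same lattice `Λ` (Definition 2.3):
a poset morphism on vertices sending edges to edges or collapsing them (MR1),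
together with a `ℤ`-linear automorphism of `Λ` for every vertex satisfying
(MR2)(a) and (MR2)(b). -/
structure Hom (G : MomentGraph Λ V) (G' : MomentGraph Λ V') where
  toFun : V → V'
  mono : ∀ {v w}, G.le v w → G'.le (toFun v) (toFun w)
  adj : ∀ {v w}, G.Adj v w → G'.Adj (toFun v) (toFun w) ∨ toFun v = toFun w
  aut : V → (Λ ≃ₗ[ℤ] Λ)
  label_pm : ∀ {v w}, G.Adj v w → toFun v ≠ toFun w →
      aut v (G.albl v w) = G'.albl (toFun v) (toFun w) ∨
      aut v (G.albl v w) = - G'.albl (toFun v) (toFun w)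
  compat : ∀ {v w}, G.Adj v w → toFun v ≠ toFun w → ∀ μ : Λ,
      ∃ n : ℤ, aut v μ - aut w μ = n • G'.albl (toFun v) (toFun w)

/-- A morphism of moment graphs is an isomorphism if it has a two-sided inverse
morphism, inverting both the vertex map and the label automorphisms. -/
def Hom.IsIso {G : MomentGraph Λ V} {G' : MomentGraph Λ V'} (f : G.Hom G') : Prop :=
  ∃ g : G'.Hom G, (∀ v, g.toFun (f.toFun v) = v) ∧ (∀ v', f.toFun (g.toFun v') = v') ∧
    ∀ v (μ : Λ), g.aut (f.toFun v) (f.aut v μ) = μ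

/-- A `Γ`-monodromy: a collection of lattice automorphisms `ξ_v` with
`ξ_v(λ) - ξ_w(λ) ∈ l(v → w)·ℤ` for all edges `v → w`. -/
def Monodromy (G : MomentGraph Λ V) (ξ : V → (Λ ≃ₗ[ℤ] Λ)) : Prop :=
  ∀ {v w}, G.E v w → ∀ μ : Λ, ∃ n : ℤ, ξ v μ - ξ w μ = n • G.label v w

/-- A `Γ`-compatible equivalence relation (EQV1) and (EQV2). -/
def Compatible (G : MomentGraph Λ V) (s : Setoid V) : Prop :=
  (∀ ⦃v w u⦄, s.r v w → G.le v u → G.le u w → s.r v u) ∧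
  (∀ ⦃v₁ w₁⦄, G.E v₁ w₁ → ¬ s.r v₁ w₁ → ∀ v₂, s.r v₂ v₁ →
    (∃! w₂, s.r w₂ w₁ ∧ G.E v₂ w₂) ∧
    (∀ w₂, s.r w₂ w₁ → G.E v₂ w₂ → G.label v₂ w₂ = G.label v₁ w₁))

/-- Edges of the quotient graph: `[v] → [w]` iff `v ≁ w` and there are
representatives joined by an edge. -/
def QE (G : MomentGraph Λ V) (s : Setoid V) (a b : Quotient s) : Prop :=
  a ≠ b ∧ ∃ v w, Quotient.mk s v = a ∧ Quotient.mk s w = b ∧ G.E v w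

open Classical in
/-- The label of a quotient edge, via a choice of representatives. -/
def Qlabel (G : MomentGraph Λ V) (s : Setoid V) (a b : Quotient s) : Λ :=
  if h : ∃ v, ∃ w, Quotient.mk s v = a ∧ Quotient.mk s w = b ∧ G.E v w
  then G.label h.choose h.choose_spec.choose else 0

/-- The covering relation of the vertex poset. -/
def cov (G : MomentGraph Λ V) (v w : V) : Prop :=
  G.le v w ∧ v ≠ w ∧ ∀ u, G.le v u → G.le u w → u = v ∨ u = w

/-- A special matching of the vertex poset (Definition of Brenti): a bijection `M`
such that `M(v)` covers or is covered by `v`, and if `M(v) ≠ w` and `v ⋖ w`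
then `M(v) ≤ M(w)`. -/
def SpecialMatching (G : MomentGraph Λ V) (M : V → V) : Prop :=
  Function.Bijective M ∧ (∀ v, G.cov (M v) v ∨ G.cov v (M v)) ∧
  (∀ v w, M v ≠ w → G.cov v w → G.le (M v) (M w))

end MomentGraph

noncomputable section StructureAlgebras

/-- The generic "structure algebra" construction: given an edge relation `E` on `V`
and an `A`-valued function `lab` (the image of the label of each edge in `A`),
this is the subalgebra of `∏_{v ∈ V} A` of tuples `(z_v)` with
`z_v - z_w ∈ lab v w · A` for every edge `v → w`, with coordinate-wise operations
and with `A` acting diagonally. -/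
def structAlg {V : Type*} {A : Type*} [CommRing A] (E : V → V → Prop) (lab : V → V → A) :
    Subalgebra A (V → A) where
  carrier := {z | ∀ ⦃v w⦄, E v w → ∃ t, z v - z w = lab v w * t}
  mul_mem' := by
    intro a b ha hb v w h
    obtain ⟨t, ht⟩ := ha h
    obtain ⟨t', ht'⟩ := hb h
    refine ⟨a v * t' + t * b w, ?_⟩
    simp only [Pi.mul_apply]
    linear_combination a v * ht' + b w * ht
  one_mem' := by intro v w h; exact ⟨0, by simp⟩
  add_mem' := by
    intro a b ha hb v w h
    obtain ⟨t, ht⟩ := ha h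
    obtain ⟨t', ht'⟩ := hb h
    refine ⟨t + t', ?_⟩
    simp only [Pi.add_apply]
    linear_combination ht + ht'
  zero_mem' := by intro v w h; exact ⟨0, by simp⟩
  algebraMap_mem' := by
    intro r v w h
    exact ⟨0, by simp⟩

set_option synthInstance.maxHeartbeats 4000000 in
instance structAlgAddCommGroup {V A : Type*} [CommRing A] (E : V → V → Prop)
    (lab : V → V → A) : AddCommGroup (structAlg E lab) :=
  inferInstance

set_option synthInstance.maxHeartbeats 4000000 in
instance structAlgModule {V A : Type*} [CommRing A] (E : V → V → Prop)
    (lab : V → V → A) : Module A (structAlg E lab) :=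
  inferInstance

/-- The group ring `ℤ[Λ]`. -/
abbrev GrpRing (Λ : Type*) [AddCommGroup Λ] := AddMonoidAlgebra ℤ Λ

variable {Λ : Type*} [AddCommGroup Λ]

/-- The basis element `e^μ` of the group ring `ℤ[Λ]`. -/
def grExp (μ : Λ) : GrpRing Λ := AddMonoidAlgebra.single μ 1

/-- The element `x_μ = 1 - e^{-μ}` of the group ring `ℤ[Λ]`. -/
def grX (μ : Λ) : GrpRing Λ := 1 - grExp (-μ)

/-- The augmentation `ℤ[Λ] → ℤ`, `e^λ ↦ 1`. -/
def grAug (Λ : Type*) [AddCommGroup Λ] : GrpRing Λ →+* ℤ :=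
  ((AddMonoidAlgebra.lift ℤ ℤ Λ) 1).toRingHom

/-- The augmentation ideal `I_m ⊂ ℤ[Λ]`. -/
def Im (Λ : Type*) [AddCommGroup Λ] : Ideal (GrpRing Λ) := RingHom.ker (grAug Λ)

/-- The multiplicative structure algebra of edge data `(E, lab)`:
tuples `(z_v)` of elements of `ℤ[Λ]` with `z_v - z_w ∈ x_{lab v w}·ℤ[Λ]`
for all edges. -/
abbrev ZmOf {V : Type*} (E : V → V → Prop) (lab : V → V → Λ) :
    Subalgebra (GrpRing Λ) (V → GrpRing Λ) :=
  structAlg E fun v w => grX (lab v w)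

/-- The multiplicative structure algebra `Z_m(Γ)` of a moment graph. -/
abbrev MomentGraph.Zm {V : Type*} (G : MomentGraph Λ V) :
    Subalgebra (GrpRing Λ) (V → GrpRing Λ) :=
  ZmOf G.E G.label

/-- Index type of a chosen basis of the lattice `Λ`. -/
abbrev bIdx (Λ : Type*) [AddCommGroup Λ] [Module.Free ℤ Λ] [Module.Finite ℤ Λ] :=
  Module.Free.ChooseBasisIndex ℤ Λ

/-- A model of the symmetric algebra `S^*(Λ)` over `ℤ`: the polynomial ring on a
basis of `Λ`. -/
abbrev SymZ (Λ : Type*) [AddCommGroup Λ] [Module.Free ℤ Λ] [Module.Finite ℤ Λ] :=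
  MvPolynomial (bIdx Λ) ℤ

variable [Module.Free ℤ Λ] [Module.Finite ℤ Λ]

/-- The canonical embedding `Λ → S^*(Λ)` (degree-one part). -/
def iotaZ (Λ : Type*) [AddCommGroup Λ] [Module.Free ℤ Λ] [Module.Finite ℤ Λ] :
    Λ →ₗ[ℤ] SymZ Λ :=
  (Finsupp.linearCombination ℤ fun i => (MvPolynomial.X i : SymZ Λ)).comp
    (Module.Free.chooseBasis ℤ Λ).repr.toLinearMap

/-- The additive structure algebra of edge data `(E, lab)`:
tuples `(z_v)` of elements of `S^*(Λ)` with `z_v - z_w ∈ l(v→w)·S^*(Λ)`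
for all edges. -/
abbrev ZaOf {V : Type*} (E : V → V → Prop) (lab : V → V → Λ) :
    Subalgebra (SymZ Λ) (V → SymZ Λ) :=
  structAlg E fun v w => iotaZ Λ (lab v w)

/-- The additive structure algebra `Z_a(Γ)` of a moment graph. -/
abbrev MomentGraph.Za {V : Type*} (G : MomentGraph Λ V) :
    Subalgebra (SymZ Λ) (V → SymZ Λ) :=
  ZaOf G.E G.label

end StructureAlgebras

/-! For an edge `v → w` of `Γ`, write `ξ_v(z_{f v}) - ξ_w(z_{f w})` as
`ξ_v(z_{f v} - z_{f w}) + (ξ_v - ξ_w)(z_{f w})`. The first term vanishes when `f` collapses the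
edge; otherwise `z_{f v} - z_{f w}` is a multiple of the image label `l'`, and `ξ_v(l') ∈ l·ℤ`
makes its image a multiple of `l` (of `x_l`, using `x_l ∣ x_{n l}`). For the second term, two ring
homomorphisms that agree modulo an ideal on the generators `e^μ` (resp. `μ`) agree modulo it
everywhere, and on generators this is the monodromy condition. -/

theorem Units.one_sub_dvd_one_sub_zpow {R : Type*} [CommRing R] (u : Rˣ) (n : ℤ) :
    1 - (u : R) ∣ 1 - ↑(u ^ n) := by
  obtain ⟨m, rfl | rfl⟩ := Int.eq_nat_or_neg n
  · simpa using one_sub_dvd_one_sub_pow (u : R) m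
  · have h : 1 - (u : R) ∣ 1 - ↑u⁻¹ :=
      ⟨-↑u⁻¹, by rw [mul_neg, sub_mul, Units.mul_inv]; ring⟩
    rw [zpow_neg, zpow_natCast, ← inv_pow, Units.val_pow_eq_pow_val]
    exact h.trans (one_sub_dvd_one_sub_pow _ m)

theorem dvd_sub_of_mk_comp_eq {R S : Type*} [Semiring R] [CommRing S] {φ ψ : R →+* S} {d : S}
    (h : (Ideal.Quotient.mk (Ideal.span {d})).comp φ = (Ideal.Quotient.mk _).comp ψ) (a : R) :
    d ∣ φ a - ψ a :=
  Ideal.mem_span_singleton.1 (Ideal.Quotient.eq.1 (RingHom.congr_fun h a))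

section GroupRing

variable {Λ : Type*} [AddCommGroup Λ]

theorem grExp_add (a b : Λ) : grExp (a + b) = grExp a * grExp b := by
  simp [grExp, AddMonoidAlgebra.single_mul_single]

def grExpUnit : Multiplicative Λ →* (GrpRing Λ)ˣ := (AddMonoidAlgebra.of ℤ Λ).toHomUnits

theorem grX_eq_one_sub_grExpUnit (μ : Λ) :
    grX μ = 1 - ↑(grExpUnit (Multiplicative.ofAdd (-μ))) := rfl

theorem grX_dvd_grX_zsmul (l : Λ) (n : ℤ) : grX l ∣ grX (n • l) := by
  rw [grX_eq_one_sub_grExpUnit, grX_eq_one_sub_grExpUnit, ← smul_neg, ofAdd_zsmul, map_zpow]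
  exact Units.one_sub_dvd_one_sub_zpow _ n

theorem grExp_sub_grExp (a b : Λ) : grExp a - grExp b = grExp a * grX (a - b) := by
  rw [grX, mul_sub, mul_one, ← grExp_add, neg_sub, add_sub_cancel]

theorem map_grX {Λ' F : Type*} [AddCommGroup Λ'] [FunLike F Λ Λ'] [AddMonoidHomClass F Λ Λ']
    {φ : GrpRing Λ →+* GrpRing Λ'} {ξ : F} (h : ∀ μ, φ (grExp μ) = grExp (ξ μ))
    (μ : Λ) :
    φ (grX μ) = grX (ξ μ) := by
  rw [grX, grX, map_sub, map_one, h, map_neg]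

theorem dvd_map_sub_map_of_grExp {R : Type*} [CommRing R] {φ ψ : GrpRing Λ →+* R} {d : R}
    (h : ∀ μ, d ∣ φ (grExp μ) - ψ (grExp μ)) (a : GrpRing Λ) : d ∣ φ a - ψ a := by
  refine dvd_sub_of_mk_comp_eq (AddMonoidAlgebra.ringHom_ext' (RingHom.ext_int _ _) ?_) a
  ext μ
  exact Ideal.Quotient.eq.2 (Ideal.mem_span_singleton.2 (h μ))

end GroupRing

section SymmetricAlgebra

variable {Λ : Type*} [AddCommGroup Λ] [Module.Free ℤ Λ] [Module.Finite ℤ Λ]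

theorem iotaZ_chooseBasis (i : bIdx Λ) :
    iotaZ Λ (Module.Free.chooseBasis ℤ Λ i) = MvPolynomial.X i := by
  simp [iotaZ]

theorem dvd_map_sub_map_of_iotaZ {R : Type*} [CommRing R] {φ ψ : SymZ Λ →+* R} {d : R}
    (h : ∀ μ, d ∣ φ (iotaZ Λ μ) - ψ (iotaZ Λ μ)) (a : SymZ Λ) : d ∣ φ a - ψ a := by
  refine dvd_sub_of_mk_comp_eq (MvPolynomial.ringHom_ext
    (fun r => by simp only [eq_intCast, map_intCast]) fun i => ?_) a
  rw [RingHom.comp_apply, RingHom.comp_apply, ← iotaZ_chooseBasis]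
  exact Ideal.Quotient.eq.2 (Ideal.mem_span_singleton.2 (h _))

end SymmetricAlgebra

def structAlg.pullback {V V' A : Type*} [CommRing A] {E : V → V → Prop} {lab : V → V → A}
    {E' : V' → V' → Prop} {lab' : V' → V' → A} (F : V → V') (φ : V → A →+* A)
    (h : ∀ z ∈ structAlg E' lab', (fun v => φ v (z (F v))) ∈ structAlg E lab) :
    structAlg E' lab' →+* structAlg E lab :=
  RingHom.codRestrict
    ((RingHom.pi fun v => (φ v).comp (Pi.evalRingHom (fun _ : V' => A) (F v))).comp
    (structAlg E' lab').val.toRingHom) _ fun z => h z z.2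

namespace MomentGraph

variable {Λ : Type*} [AddCommGroup Λ] {V V' A : Type*} [CommRing A]
  {G : MomentGraph Λ V} {G' : MomentGraph Λ V'}

theorem albl_of_E {v w : V} (h : G.E v w) : G.albl v w = G.label v w := if_pos h

theorem dvd_sub_of_mem_structAlg (ι : Λ → A) {z : V → A}
    (hz : z ∈ structAlg G.E fun v w => ι (G.label v w)) {v w : V} (h : G.Adj v w) :
    ι (G.albl v w) ∣ z v - z w := by
  by_cases hvw : G.E v w
  · rw [albl_of_E hvw]
    exact hz hvw
  · rw [albl, if_neg hvw]
    exact dvd_sub_comm.1 (hz (h.resolve_left hvw))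

theorem Hom.twist_mem_structAlg (f : G.Hom G') (ι : Λ → A) (φ : V → A →+* A)
    (hφ : ∀ {v w}, G.E v w → ∀ a, ι (G.label v w) ∣ φ v a - φ w a)
    (hφf : ∀ {v w}, G.E v w → f.toFun v ≠ f.toFun w →
      ι (G.label v w) ∣ φ v (ι (G'.albl (f.toFun v) (f.toFun w))))
    {z : V' → A} (hz : z ∈ structAlg G'.E fun v w => ι (G'.label v w)) :
    (fun v => φ v (z (f.toFun v))) ∈ structAlg G.E fun v w => ι (G.label v w) := by
  intro v w hE
  show ι (G.label v w) ∣ _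
  have hcollapse : ι (G.label v w) ∣ φ v (z (f.toFun v)) - φ v (z (f.toFun w)) := by
    by_cases heq : f.toFun v = f.toFun w
    · simp [heq]
    · rw [← map_sub]
      exact (hφf hE heq).trans <| map_dvd (φ v) <|
        dvd_sub_of_mem_structAlg ι hz ((f.adj (Or.inl hE)).resolve_right heq)
  simpa only [sub_add_sub_cancel] using dvd_add hcollapse (hφ hE (z (f.toFun w)))

variable {ξ : V → (Λ ≃ₗ[ℤ] Λ)}

theorem Monodromy.grX_dvd_map_sub_map (hmon : G.Monodromy ξ)
    {gξ : V → GrpRing Λ →+* GrpRing Λ} (hgξ : ∀ v μ, gξ v (grExp μ) = grExp (ξ v μ))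
    {v w : V} (hE : G.E v w) (a : GrpRing Λ) :
    grX (G.label v w) ∣ gξ v a - gξ w a := by
  refine dvd_map_sub_map_of_grExp (fun μ => ?_) a
  obtain ⟨n, hn⟩ := hmon hE μ
  rw [hgξ, hgξ, grExp_sub_grExp, hn]
  exact dvd_mul_of_dvd_right (grX_dvd_grX_zsmul _ n) _

theorem Monodromy.iotaZ_dvd_map_sub_map [Module.Free ℤ Λ] [Module.Finite ℤ Λ]
    (hmon : G.Monodromy ξ) {sξ : V → SymZ Λ →+* SymZ Λ}
    (hsξ : ∀ v μ, sξ v (iotaZ Λ μ) = iotaZ Λ (ξ v μ)) {v w : V} (hE : G.E v w)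
    (a : SymZ Λ) :
    iotaZ Λ (G.label v w) ∣ sξ v a - sξ w a := by
  refine dvd_map_sub_map_of_iotaZ (fun μ => ?_) a
  obtain ⟨n, hn⟩ := hmon hE μ
  rw [hsξ, hsξ, ← map_sub, hn, map_zsmul, zsmul_eq_mul]
  exact dvd_mul_left _ _

end MomentGraph

noncomputable section Statements
open MomentGraph
variable {Λ : Type*} [AddCommGroup Λ] [Module.Free ℤ Λ] [Module.Finite ℤ Λ]
variable {V V' : Type*}


theorem stmt5 (G : MomentGraph Λ V) (G' : MomentGraph Λ V') (f : G.Hom G')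
    (ξ : V → (Λ ≃ₗ[ℤ] Λ)) (hmon : G.Monodromy ξ)
    (htw : ∀ v w, G.Adj v w → f.toFun v ≠ f.toFun w →
      ∃ n : ℤ, ξ v (G'.albl (f.toFun v) (f.toFun w)) = n • G.albl v w)
    (gξ : V → (GrpRing Λ →+* GrpRing Λ))
    (hgξ : ∀ v (μ : Λ), gξ v (grExp μ) = grExp (ξ v μ))
    (sξ : V → (SymZ Λ →+* SymZ Λ))
    (hsξ : ∀ v (μ : Λ), sξ v (iotaZ Λ μ) = iotaZ Λ (ξ v μ)) :
    (∃ Φ : G'.Zm →+* G.Zm, ∀ (z : G'.Zm) (v : V),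
        (Φ z : V → GrpRing Λ) v = gξ v ((z : V' → GrpRing Λ) (f.toFun v))) ∧
    (∃ Ψ : G'.Za →+* G.Za, ∀ (z : G'.Za) (v : V),
        (Ψ z : V → SymZ Λ) v = sξ v ((z : V' → SymZ Λ) (f.toFun v))) := by
  have hlabel : ∀ {v w}, G.E v w → f.toFun v ≠ f.toFun w →
      ∃ n : ℤ, ξ v (G'.albl (f.toFun v) (f.toFun w)) = n • G.label v w := fun hE hne => by
    simpa only [albl_of_E hE] using htw _ _ (Or.inl hE) hne
  refine ⟨⟨structAlg.pullback f.toFun gξ (fun _ => f.twist_mem_structAlg grX gξ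
      (hmon.grX_dvd_map_sub_map hgξ) fun hE hne => ?_), fun _ _ => rfl⟩,
    ⟨structAlg.pullback f.toFun sξ (fun _ => f.twist_mem_structAlg (iotaZ Λ) sξ
      (hmon.iotaZ_dvd_map_sub_map hsξ) fun hE hne => ?_), fun _ _ => rfl⟩⟩
  · obtain ⟨n, hn⟩ := hlabel hE hne
    rw [map_grX (hgξ _), hn]
    exact grX_dvd_grX_zsmul _ n
  · obtain ⟨n, hn⟩ := hlabel hE hne
    rw [hsξ, hn, map_zsmul, zsmul_eq_mul]
    exact dvd_mul_left _ _

end Statements
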